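/- arXiv:0907.2460 — 4 statements merged into one kernel-verified Lean document; each statement's English description precedes it below -/
import Mathlib

section
/- Let X be a compact Hausdorff topological space and let lim : Ultrafilter X → X assign to each ultrafilter its unique limit point (so ↑F ≤ 𝓝 (lim F) for all F). Then lim (pure x) = x for all x ∈ X, and for every ultrafilter 𝔾 on Ultrafilter X, lim (Ultrafilter.join 𝔾) = lim (Ultrafilter.map lim 𝔾). -/
/-!
By uniqueness of limits it suffices to see that `pure x` converges to `x` and `join 𝔾` to
`x := lim (map lim 𝔾)`. For the latter, if `U` is an open neighbourhood of `x`, then `lim F ∈ U`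
for `𝔾`-almost every `F`, and each such `F` contains `U`; so `U ∈ join 𝔾`.
-/

open Filter Topology

/-- The monad multiplication (join) of the ultrafilter monad. -/
def Ultrafilter.join {α : Type*} (𝔾 : Ultrafilter (Ultrafilter α)) : Ultrafilter α :=
  𝔾.bind id

namespace Ultrafilter

theorem mem_join {α : Type*} {𝔾 : Ultrafilter (Ultrafilter α)} {s : Set α} :
    s ∈ 𝔾.join ↔ {F : Ultrafilter α | s ∈ F} ∈ 𝔾 :=
  Iff.rfl

theorem join_le_nhds {X : Type*} [TopologicalSpace X] {f : Ultrafilter X → X}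
    (hf : ∀ F : Ultrafilter X, (F : Filter X) ≤ 𝓝 (f F)) {𝔾 : Ultrafilter (Ultrafilter X)}
    {x : X} (hx : (𝔾.map f : Filter X) ≤ 𝓝 x) : (𝔾.join : Filter X) ≤ 𝓝 x := by
  rw [le_nhds_iff]
  intro U hxU hU
  have hpre : f ⁻¹' U ∈ 𝔾 := hx (hU.mem_nhds hxU)
  exact mem_join.2 <| mem_of_superset hpre fun F hF => hf F (hU.mem_nhds hF)

theorem lim_eq_of_le_nhds {X : Type*} [TopologicalSpace X] [T2Space X] {lim : Ultrafilter X → X}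
    (hlim : ∀ F : Ultrafilter X, (F : Filter X) ≤ 𝓝 (lim F)) {F : Ultrafilter X} {x : X}
    (hx : (F : Filter X) ≤ 𝓝 x) : lim F = x :=
  tendsto_nhds_unique (f := id) (hlim F) hx

end Ultrafilter

theorem stmt3_general {X : Type*} [TopologicalSpace X] [T2Space X]
    (lim : Ultrafilter X → X)
    (hlim : ∀ F : Ultrafilter X, (F : Filter X) ≤ 𝓝 (lim F)) :
    (∀ x : X, lim (pure x) = x) ∧
    (∀ 𝔾 : Ultrafilter (Ultrafilter X),
      lim (Ultrafilter.join 𝔾) = lim (Ultrafilter.map lim 𝔾)) :=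
  ⟨fun x => Ultrafilter.lim_eq_of_le_nhds hlim (pure_le_nhds x),
    fun _ => Ultrafilter.lim_eq_of_le_nhds hlim (Ultrafilter.join_le_nhds hlim (hlim _))⟩

/-- For a compact Hausdorff space, the map assigning to each ultrafilter its unique
limit is an algebra structure for the ultrafilter monad. -/
theorem stmt3 {X : Type*} [TopologicalSpace X] [CompactSpace X] [T2Space X]
    (lim : Ultrafilter X → X)
    (hlim : ∀ F : Ultrafilter X, (F : Filter X) ≤ 𝓝 (lim F)) :
    (∀ x : X, lim (pure x) = x) ∧
    (∀ 𝔾 : Ultrafilter (Ultrafilter X),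
      lim (Ultrafilter.join 𝔾) = lim (Ultrafilter.map lim 𝔾)) :=
  stmt3_general lim hlim
end

section
/- Let X be a set and m : Ultrafilter X → X a function satisfying m (pure x) = x for all x, and m (Ultrafilter.join 𝔾) = m (Ultrafilter.map m 𝔾) for every ultrafilter 𝔾 on Ultrafilter X. Then there exists a unique topology on X which is compact and Hausdorff and in which every ultrafilter F converges to m F (i.e. ↑F ≤ 𝓝 (m F)). -/
open Filter Topology

/-!
Existence is Mathlib's `Compactum` topology on an algebra of the ultrafilter monad. For
uniqueness, in a Hausdorff space an ultrafilter has at most one limit, so if every `F`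
converges to `m F`, then `F` converges to `x` exactly when `x = m F`; the closed sets are
then forced to be the sets `S` with `m F ∈ S` whenever `S ∈ F`.
-/

open CategoryTheory

def Compactum.ofStructureMap {X : Type*} (m : Ultrafilter X → X)
    (h1 : ∀ x : X, m (pure x) = x)
    (h2 : ∀ 𝔾 : Ultrafilter (Ultrafilter X),
      m (Ultrafilter.join 𝔾) = m (Ultrafilter.map m 𝔾)) : Compactum where
  A := X
  a := ↾m
  unit := by ext x; exact h1 x
  assoc := by ext 𝔾; exact h2 𝔾

section LimitMap

variable {X : Type*} [TopologicalSpace X] [T2Space X] {m : Ultrafilter X → X}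

theorem Ultrafilter.le_nhds_iff_eq_of_forall_le_nhds
    (hconv : ∀ F : Ultrafilter X, ↑F ≤ 𝓝 (m F)) (F : Ultrafilter X) (x : X) : ↑F ≤ 𝓝 x ↔ x = m F :=
  ⟨fun hx => tendsto_nhds_unique (f := id) hx (hconv F), fun hx => hx ▸ hconv F⟩

theorem isClosed_iff_of_forall_le_nhds (hconv : ∀ F : Ultrafilter X, ↑F ≤ 𝓝 (m F)) (S : Set X) :
    IsClosed S ↔ ∀ F : Ultrafilter X, S ∈ F → m F ∈ S := by
  simp only [isClosed_iff_ultrafilter, Ultrafilter.le_nhds_iff_eq_of_forall_le_nhds hconv]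
  exact ⟨fun h F hF => h _ F rfl hF, fun h x F hx hF => hx ▸ h F hF⟩

end LimitMap

/-- Manes' theorem: an algebra structure for the ultrafilter monad on a set `X`
determines a unique compact Hausdorff topology in which each ultrafilter `F`
converges to `m F`. -/
theorem stmt4 {X : Type*} (m : Ultrafilter X → X)
    (h1 : ∀ x : X, m (pure x) = x)
    (h2 : ∀ 𝔾 : Ultrafilter (Ultrafilter X),
      m (Ultrafilter.join 𝔾) = m (Ultrafilter.map m 𝔾)) :
    ∃! t : TopologicalSpace X,
      @CompactSpace X t ∧ @T2Space X t ∧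
      ∀ F : Ultrafilter X, (F : Filter X) ≤ @nhds X t (m F) := by
  let C := Compactum.ofStructureMap m h1 h2
  refine ⟨Compactum.instTopologicalSpaceA (X := C),
    ⟨Compactum.instCompactSpaceA (X := C), Compactum.instT2SpaceA (X := C),
      fun F => Compactum.le_nhds_of_str_eq (X := C) F (m F) rfl⟩,
    ?_⟩
  rintro t ⟨-, ht, hconv⟩
  refine TopologicalSpace.ext_isClosed fun S => ?_
  rw [@isClosed_iff_of_forall_le_nhds X t ht m hconv S]
  exact (Compactum.isClosed_iff (X := C) S).symm
end

section
/- For a relation r : X → Y → Prop, define its Barr extension Ûr : Ultrafilter X → Ultrafilter Y → Prop by Ûr F G := ∃ 𝒰 : Ultrafilter {p : X × Y // r p.1 p.2}, Ultrafilter.map (fun p => p.1.1) 𝒰 = F ∧ Ultrafilter.map (fun p => p.1.2) 𝒰 = G. Then the Barr extension preserves relational composition: for relations r : X → Y → Prop and s : Y → Z → Prop, and ultrafilters F on X and H on Z, Û(s ∘ r) F H holds if and only if there exists an ultrafilter G on Y with Ûr F G and Ûs G H, where (s ∘ r) x z := ∃ y, r x y ∧ s y z. -/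
/-!
Going from `s ∘ r` to the pair `r`, `s` only needs a choice of middle point `y` for each related
pair `(x, z)`, pushed forward along the given ultrafilter. Conversely, witnesses `𝒰` for `r` and
`𝒱` for `s` with the same middle ultrafilter `G` glue to an ultrafilter on the pullback of their
graphs over `Y`. Indeed the ultrafilter functor weakly preserves pullbacks: `𝒰 ×ˢ 𝒱` meets the
pullback, since the images in `Y` of large sets are both in `G` and so intersect, and any
ultrafilter refining its trace there (ultrafilter lemma) has marginals `𝒰` and `𝒱`.
-/

/-- The Barr extension of a relation `r : X → Y → Prop` to ultrafilters. -/
def barrExt {X Y : Type*} (r : X → Y → Prop) (F : Ultrafilter X) (G : Ultrafilter Y) : Prop :=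
  ∃ 𝒰 : Ultrafilter {p : X × Y // r p.1 p.2},
    Ultrafilter.map (fun p => p.1.1) 𝒰 = F ∧ Ultrafilter.map (fun p => p.1.2) 𝒰 = G

open Filter

theorem Ultrafilter.exists_on_pullback_of_map_eq {α β γ : Type*} {f : α → γ} {g : β → γ}
    {𝒰 : Ultrafilter α} {𝒱 : Ultrafilter β} (h : 𝒰.map f = 𝒱.map g) :
    ∃ 𝒲 : Ultrafilter {p : α × β // f p.1 = g p.2},
      𝒲.map (fun p => p.1.1) = 𝒰 ∧ 𝒲.map (fun p => p.1.2) = 𝒱 := by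
  have hne : (Filter.comap Subtype.val ((𝒰 : Filter α) ×ˢ (𝒱 : Filter β)) :
      Filter {p : α × β // f p.1 = g p.2}).NeBot := by
    refine comap_neBot fun t ht => ?_
    obtain ⟨U, hU, V, hV, hUV⟩ := mem_prod_iff.mp ht
    have hgV : g '' V ∈ 𝒰.map f := h ▸ image_mem_map hV
    obtain ⟨c, ⟨u, hu, rfl⟩, v, hv, hfg⟩ :=
      (𝒰.map f).nonempty_of_mem (inter_mem (image_mem_map hU) hgV)
    exact ⟨⟨(u, v), hfg.symm⟩, hUV ⟨hu, hv⟩⟩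
  obtain ⟨𝒲, h𝒲⟩ := @exists_le _ _ hne
  have h𝒲prod : Tendsto (↑) (𝒲 : Filter {p : α × β // f p.1 = g p.2}) (𝒰 ×ˢ 𝒱) :=
    tendsto_comap.mono_left h𝒲
  exact ⟨𝒲, eq_of_le (f := 𝒲.map _) (tendsto_fst.comp h𝒲prod),
    eq_of_le (f := 𝒲.map _) (tendsto_snd.comp h𝒲prod)⟩

theorem barrExt_map_map {α X Y : Type*} {r : X → Y → Prop} (𝒲 : Ultrafilter α)
    {a : α → X} {b : α → Y} (hab : ∀ w, r (a w) (b w)) : barrExt r (𝒲.map a) (𝒲.map b) :=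
  ⟨𝒲.map fun w => ⟨(a w, b w), hab w⟩, by simp [Function.comp_def], by simp [Function.comp_def]⟩

/-- The Barr extension preserves relational composition. -/
theorem stmt6 {X Y Z : Type*} (r : X → Y → Prop) (s : Y → Z → Prop)
    (F : Ultrafilter X) (H : Ultrafilter Z) :
    barrExt (fun x z => ∃ y, r x y ∧ s y z) F H ↔
      ∃ G : Ultrafilter Y, barrExt r F G ∧ barrExt s G H := by
  constructor
  · rintro ⟨𝒰, rfl, rfl⟩
    choose y hr hs using fun p : {p : X × Z // ∃ y, r p.1 y ∧ s y p.2} => p.2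
    exact ⟨𝒰.map y, barrExt_map_map 𝒰 hr, barrExt_map_map 𝒰 hs⟩
  · rintro ⟨G, ⟨𝒰, rfl, rfl⟩, 𝒱, hG, rfl⟩
    obtain ⟨𝒲, rfl, rfl⟩ := Ultrafilter.exists_on_pullback_of_map_eq hG.symm
    simp only [Ultrafilter.map_map]
    exact barrExt_map_map 𝒲 fun w => ⟨_, w.1.1.2, w.2 ▸ w.1.2.2⟩
end

section
/- Let X be a topological space and define conv : Ultrafilter X → X → Prop by conv G x := ↑G ≤ 𝓝 x. Let the Barr extension of conv be the relation on Ultrafilter (Ultrafilter X) × Ultrafilter X given by c̄onv 𝔾 F := ∃ 𝒰 : Ultrafilter {p : Ultrafilter X × X // conv p.1 p.2}, Ultrafilter.map (fun p => p.1.1) 𝒰 = 𝔾 ∧ Ultrafilter.map (fun p => p.1.2) 𝒰 = F. Then: (1) conv (pure x) x for all x; and (2) if c̄onv 𝔾 F and conv F x, then conv (Ultrafilter.join 𝔾) x. -/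
open Filter Topology

theorem Ultrafilter.mem_join_s7 {α : Type*} {𝔾 : Ultrafilter (Ultrafilter α)} {s : Set α} :
    s ∈ Ultrafilter.join 𝔾 ↔ {G : Ultrafilter α | s ∈ G} ∈ 𝔾 :=
  Iff.rfl

theorem Ultrafilter.join_map_le_nhds {X ι : Type*} [TopologicalSpace X] (𝒰 : Ultrafilter ι)
    {G : ι → Ultrafilter X} {y : ι → X} {x : X} (hG : ∀ i, ↑(G i) ≤ 𝓝 (y i))
    (hy : Tendsto y 𝒰 (𝓝 x)) : ↑(Ultrafilter.join (𝒰.map G)) ≤ 𝓝 x := by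
  intro U hU
  rw [Ultrafilter.mem_coe, Ultrafilter.mem_join_s7, Ultrafilter.mem_map]
  filter_upwards [hy.eventually (eventually_mem_nhds_iff.mpr hU)] with i hi
  exact hG i hi

/-- The ultrafilter convergence relation of a topological space satisfies the unit and
multiplication laws of a lax algebra for the ultrafilter monad (Barr). -/
theorem stmt7 {X : Type*} [TopologicalSpace X] :
    (∀ x : X, (pure x : Filter X) ≤ 𝓝 x) ∧
    (∀ (𝔾 : Ultrafilter (Ultrafilter X)) (F : Ultrafilter X) (x : X),
      (∃ 𝒰 : Ultrafilter {p : Ultrafilter X × X // (p.1 : Filter X) ≤ 𝓝 p.2},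
        Ultrafilter.map (fun p => p.1.1) 𝒰 = 𝔾 ∧
        Ultrafilter.map (fun p => p.1.2) 𝒰 = F) →
      (F : Filter X) ≤ 𝓝 x →
      (Ultrafilter.join 𝔾 : Filter X) ≤ 𝓝 x) := by
  refine ⟨pure_le_nhds, ?_⟩
  rintro _ _ x ⟨𝒰, rfl, rfl⟩ hF
  exact 𝒰.join_map_le_nhds (fun p => p.2) hF
end
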